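/- arXiv:1601.07345 — 4 statements merged into one kernel-verified Lean document; each statement's English description precedes it below -/
import Mathlib

section
/- For k = 1,2 let a_k > 0, ε > 0, let 𝒫_k : (0,∞)×ℝ → ℝ be differentiable and e_k differentiable with ∂_τ e_k(τ,s) = −𝒫_k(τ,s). Let α₁, ρ_k, u_k, s_k, 𝒯_k be C¹ functions of (x,t) with α₁ ∈ (0,1), ρ_k > 0, set α₂ = 1−α₁, τ_k = 1/ρ_k, π_k = 𝒫_k(𝒯_k,s_k) + a_k²(𝒯_k − τ_k), and suppose they satisfy pointwise the relaxation system with source: ∂_tα₁ + u₂∂_xα₁ = 0; ∂_t(α_kρ_k) + ∂_x(α_kρ_ku_k) = 0; ∂_t(α_kρ_ku_k) + ∂_x(α_kρ_ku_k² + α_kπ_k) − π₁∂_xα_k = 0; ∂_t(α_kρ_ks_k) + ∂_x(α_kρ_ks_ku_k) = 0; ∂_t(α_kρ_k𝒯_k) + ∂_x(α_kρ_k𝒯_ku_k) = (1/ε)α_kρ_k(τ_k − 𝒯_k). Then, with ℰ_k := u_k²/2 + e_k(𝒯_k,s_k) + (π_k² − 𝒫_k(𝒯_k,s_k)²)/(2a_k²),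 the following energy balance holds for k = 1,2: ∂_t(α_kρ_kℰ_k) + ∂_x(α_kρ_kℰ_ku_k + α_kπ_ku_k) − u₂π₁∂_xα_k = −(1/ε)α_kρ_k(a_k² + ∂_τ𝒫_k(𝒯_k,s_k))(τ_k − 𝒯_k)²; in particular the right-hand side is nonpositive under Whitham's condition a_k² > −∂_τ𝒫_k(𝒯_k,s_k). -/
/-!
Write `D = ∂_t + u_k ∂_x`. Mass conservation turns each conservative equation
`∂_t(α_kρ_kφ) + ∂_x(α_kρ_kφu_k)` into `α_kρ_k Dφ`, and gives `α_kρ_k Dτ_k = ∂_tα_k + ∂_x(α_ku_k)`.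
Since `∂_τe_k = −𝒫_k`, the chain rule gives the Gibbs-type relation
`Dℰ_k = u_k Du_k + (𝒯_k − τ_k)(a_k² + ∂_τ𝒫_k) D𝒯_k + (∂_se_k + (𝒯_k − τ_k)∂_s𝒫_k) Ds_k − π_k Dτ_k`.
The entropy equation removes the `Ds_k` term, the relaxation equation turns the `D𝒯_k` term into the
dissipation `−(1/ε)α_kρ_k(a_k² + ∂_τ𝒫_k)(τ_k − 𝒯_k)²`, and momentum together with the transport of
`α₁` leaves only `(u_k − u₂)(π₁ − π_k)∂_xα_k`, which vanishes for both phases.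
-/

noncomputable section

/-- Partial derivative with respect to the space variable `x`. -/
def pdx (f : ℝ → ℝ → ℝ) (x t : ℝ) : ℝ := deriv (fun y => f y t) x

/-- Partial derivative with respect to the time variable `t`. -/
def pdt (f : ℝ → ℝ → ℝ) (x t : ℝ) : ℝ := deriv (fun s => f x s) t

/-- The space-time domain `ℝ × (0,∞)`. -/
def upperHalf : Set (ℝ × ℝ) := Set.univ ×ˢ Set.Ioi (0 : ℝ)

theorem hasDerivAt_comp₂ {g : ℝ → ℝ → ℝ} {f h : ℝ → ℝ} {f' h' z : ℝ}
    (hg : DifferentiableAt ℝ (fun q : ℝ × ℝ => g q.1 q.2) (f z, h z))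
    (hf : HasDerivAt f f' z) (hh : HasDerivAt h h' z) :
    HasDerivAt (fun w => g (f w) (h w))
      (f' * deriv (fun a => g a (h z)) (f z) + h' * deriv (fun b => g (f z) b) (h z)) z := by
  set L := fderiv ℝ (fun q : ℝ × ℝ => g q.1 q.2) (f z, h z)
  have hL : HasFDerivAt (fun q : ℝ × ℝ => g q.1 q.2) L (f z, h z) := hg.hasFDerivAt
  have c₁ : HasDerivAt (fun a => (a, h z)) ((1 : ℝ), (0 : ℝ)) (f z) :=
    (hasDerivAt_id _).prodMk (hasDerivAt_const _ _)
  have c₂ : HasDerivAt (fun b => (f z, b)) ((0 : ℝ), (1 : ℝ)) (h z) :=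
    (hasDerivAt_const _ _).prodMk (hasDerivAt_id _)
  have h₁ : deriv (fun a => g a (h z)) (f z) = L (1, 0) :=
    (hL.comp_hasDerivAt (f z) c₁ :).deriv
  have h₂ : deriv (fun b => g (f z) b) (h z) = L (0, 1) :=
    (hL.comp_hasDerivAt (h z) c₂ :).deriv
  have hsplit : L (f', h') = f' * L (1, 0) + h' * L (0, 1) := by
    rw [← smul_eq_mul, ← smul_eq_mul, ← map_smul, ← map_smul, ← map_add]
    simp
  rw [h₁, h₂, ← hsplit]
  exact hL.comp_hasDerivAt z (hf.prodMk hh)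

section Partials

variable {f g : ℝ → ℝ → ℝ} {x t : ℝ}

theorem hasDerivAt_pdx (hf : DifferentiableAt ℝ (fun q : ℝ × ℝ => f q.1 q.2) (x, t)) :
    HasDerivAt (fun y => f y t) (pdx f x t) x := by
  simpa [pdx] using hasDerivAt_comp₂ hf (hasDerivAt_id x) (hasDerivAt_const x t)

theorem hasDerivAt_pdt (hf : DifferentiableAt ℝ (fun q : ℝ × ℝ => f q.1 q.2) (x, t)) :
    HasDerivAt (fun r => f x r) (pdt f x t) t := by
  simpa [pdt] using hasDerivAt_comp₂ hf (hasDerivAt_const t x) (hasDerivAt_id t)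

theorem pdx_add (hf : DifferentiableAt ℝ (fun q : ℝ × ℝ => f q.1 q.2) (x, t))
    (hg : DifferentiableAt ℝ (fun q : ℝ × ℝ => g q.1 q.2) (x, t)) :
    pdx (fun y r => f y r + g y r) x t = pdx f x t + pdx g x t :=
  ((hasDerivAt_pdx hf).add (hasDerivAt_pdx hg)).deriv

theorem pdx_mul (hf : DifferentiableAt ℝ (fun q : ℝ × ℝ => f q.1 q.2) (x, t))
    (hg : DifferentiableAt ℝ (fun q : ℝ × ℝ => g q.1 q.2) (x, t)) :
    pdx (fun y r => f y r * g y r) x t = pdx f x t * g x t + f x t * pdx g x t :=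
  ((hasDerivAt_pdx hf).mul (hasDerivAt_pdx hg)).deriv

theorem pdt_mul (hf : DifferentiableAt ℝ (fun q : ℝ × ℝ => f q.1 q.2) (x, t))
    (hg : DifferentiableAt ℝ (fun q : ℝ × ℝ => g q.1 q.2) (x, t)) :
    pdt (fun y r => f y r * g y r) x t = pdt f x t * g x t + f x t * pdt g x t :=
  ((hasDerivAt_pdt hf).mul (hasDerivAt_pdt hg)).deriv

theorem pdx_const_sub (c : ℝ) : pdx (fun y r => c - f y r) x t = -pdx f x t :=
  deriv_const_sub c

theorem pdt_const_sub (c : ℝ) : pdt (fun y r => c - f y r) x t = -pdt f x t :=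
  deriv_const_sub c

end Partials

def materialDeriv (u φ : ℝ → ℝ → ℝ) (x t : ℝ) : ℝ := pdt φ x t + u x t * pdx φ x t

theorem pdt_mul_add_pdx_mul_mul {m φ u : ℝ → ℝ → ℝ} {x t : ℝ}
    (hm : DifferentiableAt ℝ (fun q : ℝ × ℝ => m q.1 q.2) (x, t))
    (hφ : DifferentiableAt ℝ (fun q : ℝ × ℝ => φ q.1 q.2) (x, t))
    (hu : DifferentiableAt ℝ (fun q : ℝ × ℝ => u q.1 q.2) (x, t)) :
    pdt (fun y r => m y r * φ y r) x t + pdx (fun y r => m y r * φ y r * u y r) x t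
      = m x t * materialDeriv u φ x t
        + φ x t * (pdt m x t + pdx (fun y r => m y r * u y r) x t) := by
  rw [materialDeriv, pdt_mul hm hφ, pdx_mul (by fun_prop) hu, pdx_mul hm hφ, pdx_mul hm hu]
  ring

theorem mul_materialDeriv_one_div {α ρ u : ℝ → ℝ → ℝ} {x t : ℝ}
    (hα : DifferentiableAt ℝ (fun q : ℝ × ℝ => α q.1 q.2) (x, t))
    (hρ : DifferentiableAt ℝ (fun q : ℝ × ℝ => ρ q.1 q.2) (x, t))
    (hu : DifferentiableAt ℝ (fun q : ℝ × ℝ => u q.1 q.2) (x, t)) (hρ₀ : ρ x t ≠ 0)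
    (hmass : pdt (fun y r => α y r * ρ y r) x t
      + pdx (fun y r => α y r * ρ y r * u y r) x t = 0) :
    α x t * ρ x t * materialDeriv u (fun y r => 1 / ρ y r) x t
      = pdt α x t + pdx α x t * u x t + α x t * pdx u x t := by
  have hτx : pdx (fun y r => 1 / ρ y r) x t = -pdx ρ x t / ρ x t ^ 2 := by
    simp only [pdx, one_div]
    exact deriv_fun_inv'' (hasDerivAt_pdx hρ).differentiableAt hρ₀
  have hτt : pdt (fun y r => 1 / ρ y r) x t = -pdt ρ x t / ρ x t ^ 2 := by
    simp only [pdt, one_div]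
    exact deriv_fun_inv'' (hasDerivAt_pdt hρ).differentiableAt hρ₀
  rw [pdt_mul hα hρ, pdx_mul (by fun_prop) hu, pdx_mul hα hρ] at hmass
  rw [materialDeriv, hτx, hτt]
  field_simp
  linear_combination -hmass

def linearizedPressure (P : ℝ → ℝ → ℝ) (a τ 𝒯 s : ℝ) : ℝ := P 𝒯 s + a ^ 2 * (𝒯 - τ)

def relaxationEnergy (P e : ℝ → ℝ → ℝ) (a u τ 𝒯 s : ℝ) : ℝ :=
  u ^ 2 / 2 + e 𝒯 s + (linearizedPressure P a τ 𝒯 s ^ 2 - P 𝒯 s ^ 2) / (2 * a ^ 2)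

theorem hasDerivAt_relaxationEnergy {P e : ℝ → ℝ → ℝ} {a : ℝ} (ha : a ≠ 0)
    {u τ 𝒯 s : ℝ → ℝ} {u' τ' 𝒯' s' z : ℝ}
    (hP : DifferentiableAt ℝ (fun q : ℝ × ℝ => P q.1 q.2) (𝒯 z, s z))
    (he : DifferentiableAt ℝ (fun q : ℝ × ℝ => e q.1 q.2) (𝒯 z, s z))
    (hGibbs : HasDerivAt (fun v => e v (s z)) (-P (𝒯 z) (s z)) (𝒯 z))
    (hu : HasDerivAt u u' z) (hτ : HasDerivAt τ τ' z) (h𝒯 : HasDerivAt 𝒯 𝒯' z)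
    (hs : HasDerivAt s s' z) :
    HasDerivAt (fun w => relaxationEnergy P e a (u w) (τ w) (𝒯 w) (s w))
      (u z * u' + (𝒯 z - τ z) * (a ^ 2 + deriv (fun v => P v (s z)) (𝒯 z)) * 𝒯'
        + (deriv (fun σ => e (𝒯 z) σ) (s z)
            + (𝒯 z - τ z) * deriv (fun σ => P (𝒯 z) σ) (s z)) * s'
        - linearizedPressure P a (τ z) (𝒯 z) (s z) * τ') z := by
  have dP := hasDerivAt_comp₂ hP h𝒯 hs
  have de := hasDerivAt_comp₂ he h𝒯 hs
  rw [hGibbs.deriv] at de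
  have dπ := dP.fun_add ((h𝒯.fun_sub hτ).const_mul (a ^ 2))
  refine (((hu.fun_pow 2).div_const 2).fun_add de |>.fun_add
    (((dπ.fun_pow 2).fun_sub (dP.fun_pow 2)).div_const (2 * a ^ 2))).congr_deriv ?_
  unfold linearizedPressure
  field_simp
  ring

theorem materialDeriv_relaxationEnergy {P e : ℝ → ℝ → ℝ} {a : ℝ} (ha : a ≠ 0)
    {ρ u s T : ℝ → ℝ → ℝ} {x t : ℝ}
    (hρ : DifferentiableAt ℝ (fun q : ℝ × ℝ => ρ q.1 q.2) (x, t))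
    (hu : DifferentiableAt ℝ (fun q : ℝ × ℝ => u q.1 q.2) (x, t))
    (hs : DifferentiableAt ℝ (fun q : ℝ × ℝ => s q.1 q.2) (x, t))
    (hT : DifferentiableAt ℝ (fun q : ℝ × ℝ => T q.1 q.2) (x, t)) (hρ₀ : ρ x t ≠ 0)
    (hP : DifferentiableAt ℝ (fun q : ℝ × ℝ => P q.1 q.2) (T x t, s x t))
    (he : DifferentiableAt ℝ (fun q : ℝ × ℝ => e q.1 q.2) (T x t, s x t))
    (hGibbs : HasDerivAt (fun v => e v (s x t)) (-P (T x t) (s x t)) (T x t)) :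
    materialDeriv u (fun y r => relaxationEnergy P e a (u y r) (1 / ρ y r) (T y r) (s y r)) x t
      = u x t * materialDeriv u u x t
        + (T x t - 1 / ρ x t) * (a ^ 2 + deriv (fun v => P v (s x t)) (T x t))
          * materialDeriv u T x t
        + (deriv (fun σ => e (T x t) σ) (s x t)
            + (T x t - 1 / ρ x t) * deriv (fun σ => P (T x t) σ) (s x t))
          * materialDeriv u s x t
        - linearizedPressure P a (1 / ρ x t) (T x t) (s x t)
          * materialDeriv u (fun y r => 1 / ρ y r) x t := by
  have hτ : DifferentiableAt ℝ (fun q : ℝ × ℝ => 1 / ρ q.1 q.2) (x, t) := by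
    fun_prop (disch := assumption)
  have hEt : pdt (fun y r => relaxationEnergy P e a (u y r) (1 / ρ y r) (T y r) (s y r)) x t
      = _ := (hasDerivAt_relaxationEnergy (z := t) ha hP he hGibbs (hasDerivAt_pdt hu)
        (hasDerivAt_pdt (f := fun y r => 1 / ρ y r) hτ) (hasDerivAt_pdt hT)
        (hasDerivAt_pdt hs)).deriv
  have hEx : pdx (fun y r => relaxationEnergy P e a (u y r) (1 / ρ y r) (T y r) (s y r)) x t
      = _ := (hasDerivAt_relaxationEnergy (z := x) ha hP he hGibbs (hasDerivAt_pdx hu)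
        (hasDerivAt_pdx (f := fun y r => 1 / ρ y r) hτ) (hasDerivAt_pdx hT)
        (hasDerivAt_pdx hs)).deriv
  simp only [materialDeriv]
  rw [hEt, hEx]
  ring

theorem phasic_energy_balance {a ε : ℝ} (ha : a ≠ 0) {P e α ρ u s T : ℝ → ℝ → ℝ}
    {x t uI πI : ℝ}
    (hα : DifferentiableAt ℝ (fun q : ℝ × ℝ => α q.1 q.2) (x, t))
    (hρ : DifferentiableAt ℝ (fun q : ℝ × ℝ => ρ q.1 q.2) (x, t))
    (hu : DifferentiableAt ℝ (fun q : ℝ × ℝ => u q.1 q.2) (x, t))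
    (hs : DifferentiableAt ℝ (fun q : ℝ × ℝ => s q.1 q.2) (x, t))
    (hT : DifferentiableAt ℝ (fun q : ℝ × ℝ => T q.1 q.2) (x, t))
    (hρ₀ : ρ x t ≠ 0)
    (hP : DifferentiableAt ℝ (fun q : ℝ × ℝ => P q.1 q.2) (T x t, s x t))
    (he : DifferentiableAt ℝ (fun q : ℝ × ℝ => e q.1 q.2) (T x t, s x t))
    (hGibbs : HasDerivAt (fun v => e v (s x t)) (-P (T x t) (s x t)) (T x t))
    (hcross : (u x t - uI) * (πI - linearizedPressure P a (1 / ρ x t) (T x t) (s x t)) = 0)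
    (halpha : pdt α x t + uI * pdx α x t = 0)
    (hmass : pdt (fun y r => α y r * ρ y r) x t
      + pdx (fun y r => α y r * ρ y r * u y r) x t = 0)
    (hmom : pdt (fun y r => α y r * ρ y r * u y r) x t
      + pdx (fun y r => α y r * ρ y r * u y r ^ 2
          + α y r * linearizedPressure P a (1 / ρ y r) (T y r) (s y r)) x t
      - πI * pdx α x t = 0)
    (hent : pdt (fun y r => α y r * ρ y r * s y r) x t
      + pdx (fun y r => α y r * ρ y r * s y r * u y r) x t = 0)
    (hTeq : pdt (fun y r => α y r * ρ y r * T y r) x t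
      + pdx (fun y r => α y r * ρ y r * T y r * u y r) x t
      = (1 / ε) * (α x t * ρ x t) * (1 / ρ x t - T x t)) :
    pdt (fun y r => α y r * ρ y r
        * relaxationEnergy P e a (u y r) (1 / ρ y r) (T y r) (s y r)) x t
      + pdx (fun y r => α y r * ρ y r
          * relaxationEnergy P e a (u y r) (1 / ρ y r) (T y r) (s y r) * u y r
        + α y r * linearizedPressure P a (1 / ρ y r) (T y r) (s y r) * u y r) x t
      - uI * πI * pdx α x t
      = -(1 / ε) * (α x t * ρ x t) * (a ^ 2 + deriv (fun v => P v (s x t)) (T x t))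
        * (1 / ρ x t - T x t) ^ 2 := by
  have hPc : DifferentiableAt ℝ (fun q : ℝ × ℝ => P (T q.1 q.2) (s q.1 q.2)) (x, t) :=
    (hP.comp (x, t) (hT.prodMk hs) :)
  have hec : DifferentiableAt ℝ (fun q : ℝ × ℝ => e (T q.1 q.2) (s q.1 q.2)) (x, t) :=
    (he.comp (x, t) (hT.prodMk hs) :)
  have hπ : DifferentiableAt ℝ (fun q : ℝ × ℝ =>
      linearizedPressure P a (1 / ρ q.1 q.2) (T q.1 q.2) (s q.1 q.2)) (x, t) := by
    unfold linearizedPressure; fun_prop (disch := assumption)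
  have hE : DifferentiableAt ℝ (fun q : ℝ × ℝ =>
      relaxationEnergy P e a (u q.1 q.2) (1 / ρ q.1 q.2) (T q.1 q.2) (s q.1 q.2)) (x, t) := by
    unfold relaxationEnergy linearizedPressure; fun_prop (disch := assumption)
  have transport : ∀ φ : ℝ → ℝ → ℝ, DifferentiableAt ℝ (fun q : ℝ × ℝ => φ q.1 q.2) (x, t) →
      pdt (fun y r => α y r * ρ y r * φ y r) x t
        + pdx (fun y r => α y r * ρ y r * φ y r * u y r) x t
        = α x t * ρ x t * materialDeriv u φ x t := fun φ hφ => by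
    rw [pdt_mul_add_pdx_mul_mul (m := fun y r => α y r * ρ y r) (by fun_prop) hφ hu, hmass,
      mul_zero, add_zero]
  have hDs : α x t * ρ x t * materialDeriv u s x t = 0 := transport s hs ▸ hent
  have hDT : α x t * ρ x t * materialDeriv u T x t
      = (1 / ε) * (α x t * ρ x t) * (1 / ρ x t - T x t) := transport T hT ▸ hTeq
  have hDu : α x t * ρ x t * materialDeriv u u x t
      + pdx (fun y r => α y r * linearizedPressure P a (1 / ρ y r) (T y r) (s y r)) x t
      - πI * pdx α x t = 0 := by
    have hflux : (fun y r => α y r * ρ y r * u y r ^ 2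
          + α y r * linearizedPressure P a (1 / ρ y r) (T y r) (s y r))
        = fun y r => α y r * ρ y r * u y r * u y r
          + α y r * linearizedPressure P a (1 / ρ y r) (T y r) (s y r) := by
      funext y r; ring
    rwa [hflux, pdx_add (by fun_prop) (by fun_prop), ← add_assoc, transport u hu] at hmom
  have hDτ := mul_materialDeriv_one_div hα hρ hu hρ₀ hmass
  have hDE := materialDeriv_relaxationEnergy ha hρ hu hs hT hρ₀ hP he hGibbs
  rw [pdx_add (by fun_prop) (by fun_prop), ← add_assoc, transport _ hE, pdx_mul (by fun_prop) hu]
  linear_combination α x t * ρ x t * hDE + u x t * hDu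
    + (T x t - 1 / ρ x t) * (a ^ 2 + deriv (fun v => P v (s x t)) (T x t)) * hDT
    + (deriv (fun σ => e (T x t) σ) (s x t)
        + (T x t - 1 / ρ x t) * deriv (fun σ => P (T x t) σ) (s x t)) * hDs
    - linearizedPressure P a (1 / ρ x t) (T x t) (s x t) * (hDτ + halpha)
    + pdx α x t * hcross

theorem isOpen_upperHalf : IsOpen upperHalf := isOpen_univ.prod isOpen_Ioi

theorem relaxation_source_nonpos {ε m a c d : ℝ} (hε : 0 < ε) (hm : 0 ≤ m) (hW : a ^ 2 > -c) :
    -(1 / ε) * m * (a ^ 2 + c) * d ^ 2 ≤ 0 := by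
  have h : 0 ≤ (1 / ε) * m * (a ^ 2 + c) * d ^ 2 :=
    mul_nonneg (mul_nonneg (mul_nonneg (by positivity) hm) (by linarith)) (sq_nonneg d)
  linarith

/-- classical solutions of the Suliciu relaxation system with
the stiff source `(1/ε)α_kρ_k(τ_k − 𝒯_k)` satisfy the phasic energy balances
`∂_t(α_kρ_kℰ_k) + ∂_x(α_kρ_kℰ_ku_k + α_kπ_ku_k) − u₂π₁∂_xα_k
  = −(1/ε)α_kρ_k(a_k² + ∂_τ𝒫_k(𝒯_k,s_k))(τ_k − 𝒯_k)²`,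
whose right-hand sides are nonpositive under Whitham's condition
`a_k² > −∂_τ𝒫_k(𝒯_k,s_k)`. -/
theorem relaxation_phasic_energy_balance_with_source
    (a₁ a₂ ε : ℝ) (ha₁ : 0 < a₁) (ha₂ : 0 < a₂) (hε : 0 < ε)
    (P₁ P₂ e₁ e₂ : ℝ → ℝ → ℝ)
    (hP₁ : ∀ τ σ : ℝ, 0 < τ →
      DifferentiableAt ℝ (fun q : ℝ × ℝ => P₁ q.1 q.2) (τ, σ))
    (hP₂ : ∀ τ σ : ℝ, 0 < τ →
      DifferentiableAt ℝ (fun q : ℝ × ℝ => P₂ q.1 q.2) (τ, σ))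
    (he₁ : ∀ τ σ : ℝ, 0 < τ →
      DifferentiableAt ℝ (fun q : ℝ × ℝ => e₁ q.1 q.2) (τ, σ)
        ∧ HasDerivAt (fun τ' => e₁ τ' σ) (-(P₁ τ σ)) τ)
    (he₂ : ∀ τ σ : ℝ, 0 < τ →
      DifferentiableAt ℝ (fun q : ℝ × ℝ => e₂ q.1 q.2) (τ, σ)
        ∧ HasDerivAt (fun τ' => e₂ τ' σ) (-(P₂ τ σ)) τ)
    (α₁ ρ₁ ρ₂ u₁ u₂ s₁ s₂ T₁ T₂ : ℝ → ℝ → ℝ)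
    (hα₁ : ContDiffOn ℝ 1 (fun q : ℝ × ℝ => α₁ q.1 q.2) upperHalf)
    (hρ₁ : ContDiffOn ℝ 1 (fun q : ℝ × ℝ => ρ₁ q.1 q.2) upperHalf)
    (hρ₂ : ContDiffOn ℝ 1 (fun q : ℝ × ℝ => ρ₂ q.1 q.2) upperHalf)
    (hu₁ : ContDiffOn ℝ 1 (fun q : ℝ × ℝ => u₁ q.1 q.2) upperHalf)
    (hu₂ : ContDiffOn ℝ 1 (fun q : ℝ × ℝ => u₂ q.1 q.2) upperHalf)
    (hs₁ : ContDiffOn ℝ 1 (fun q : ℝ × ℝ => s₁ q.1 q.2) upperHalf)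
    (hs₂ : ContDiffOn ℝ 1 (fun q : ℝ × ℝ => s₂ q.1 q.2) upperHalf)
    (hT₁ : ContDiffOn ℝ 1 (fun q : ℝ × ℝ => T₁ q.1 q.2) upperHalf)
    (hT₂ : ContDiffOn ℝ 1 (fun q : ℝ × ℝ => T₂ q.1 q.2) upperHalf)
    (hadm : ∀ x t : ℝ, 0 < t →
      0 < α₁ x t ∧ α₁ x t < 1 ∧ 0 < ρ₁ x t ∧ 0 < ρ₂ x t
        ∧ 0 < T₁ x t ∧ 0 < T₂ x t)
    -- phase fraction equation
    (halpha : ∀ x t : ℝ, 0 < t → pdt α₁ x t + u₂ x t * pdx α₁ x t = 0)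
    -- mass conservation, k = 1, 2
    (hmass₁ : ∀ x t : ℝ, 0 < t →
      pdt (fun y r => α₁ y r * ρ₁ y r) x t
        + pdx (fun y r => α₁ y r * ρ₁ y r * u₁ y r) x t = 0)
    (hmass₂ : ∀ x t : ℝ, 0 < t →
      pdt (fun y r => (1 - α₁ y r) * ρ₂ y r) x t
        + pdx (fun y r => (1 - α₁ y r) * ρ₂ y r * u₂ y r) x t = 0)
    -- momentum balance with the linearized pressures, k = 1, 2
    (hmom₁ : ∀ x t : ℝ, 0 < t →
      pdt (fun y r => α₁ y r * ρ₁ y r * u₁ y r) x t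
        + pdx (fun y r => α₁ y r * ρ₁ y r * (u₁ y r) ^ 2
            + α₁ y r * (P₁ (T₁ y r) (s₁ y r)
                + a₁ ^ 2 * (T₁ y r - 1 / ρ₁ y r))) x t
        - (P₁ (T₁ x t) (s₁ x t) + a₁ ^ 2 * (T₁ x t - 1 / ρ₁ x t))
            * pdx α₁ x t = 0)
    (hmom₂ : ∀ x t : ℝ, 0 < t →
      pdt (fun y r => (1 - α₁ y r) * ρ₂ y r * u₂ y r) x t
        + pdx (fun y r => (1 - α₁ y r) * ρ₂ y r * (u₂ y r) ^ 2
            + (1 - α₁ y r) * (P₂ (T₂ y r) (s₂ y r)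
                + a₂ ^ 2 * (T₂ y r - 1 / ρ₂ y r))) x t
        - (P₁ (T₁ x t) (s₁ x t) + a₁ ^ 2 * (T₁ x t - 1 / ρ₁ x t))
            * pdx (fun y r => 1 - α₁ y r) x t = 0)
    -- entropy conservation, k = 1, 2
    (hent₁ : ∀ x t : ℝ, 0 < t →
      pdt (fun y r => α₁ y r * ρ₁ y r * s₁ y r) x t
        + pdx (fun y r => α₁ y r * ρ₁ y r * s₁ y r * u₁ y r) x t = 0)
    (hent₂ : ∀ x t : ℝ, 0 < t →
      pdt (fun y r => (1 - α₁ y r) * ρ₂ y r * s₂ y r) x t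
        + pdx (fun y r => (1 - α₁ y r) * ρ₂ y r * s₂ y r * u₂ y r) x t = 0)
    -- relaxed specific volumes with stiff relaxation source, k = 1, 2
    (hTeq₁ : ∀ x t : ℝ, 0 < t →
      pdt (fun y r => α₁ y r * ρ₁ y r * T₁ y r) x t
        + pdx (fun y r => α₁ y r * ρ₁ y r * T₁ y r * u₁ y r) x t
        = (1 / ε) * (α₁ x t * ρ₁ x t) * (1 / ρ₁ x t - T₁ x t))
    (hTeq₂ : ∀ x t : ℝ, 0 < t →
      pdt (fun y r => (1 - α₁ y r) * ρ₂ y r * T₂ y r) x t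
        + pdx (fun y r => (1 - α₁ y r) * ρ₂ y r * T₂ y r * u₂ y r) x t
        = (1 / ε) * ((1 - α₁ x t) * ρ₂ x t) * (1 / ρ₂ x t - T₂ x t)) :
    ∀ x t : ℝ, 0 < t →
      -- phase 1 energy balance
      (pdt (fun y r => α₁ y r * ρ₁ y r
            * ((u₁ y r) ^ 2 / 2 + e₁ (T₁ y r) (s₁ y r)
              + ((P₁ (T₁ y r) (s₁ y r) + a₁ ^ 2 * (T₁ y r - 1 / ρ₁ y r)) ^ 2
                  - (P₁ (T₁ y r) (s₁ y r)) ^ 2) / (2 * a₁ ^ 2))) x t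
        + pdx (fun y r => α₁ y r * ρ₁ y r
              * ((u₁ y r) ^ 2 / 2 + e₁ (T₁ y r) (s₁ y r)
                + ((P₁ (T₁ y r) (s₁ y r) + a₁ ^ 2 * (T₁ y r - 1 / ρ₁ y r)) ^ 2
                    - (P₁ (T₁ y r) (s₁ y r)) ^ 2) / (2 * a₁ ^ 2)) * u₁ y r
            + α₁ y r * (P₁ (T₁ y r) (s₁ y r)
                + a₁ ^ 2 * (T₁ y r - 1 / ρ₁ y r)) * u₁ y r) x t
        - u₂ x t * (P₁ (T₁ x t) (s₁ x t) + a₁ ^ 2 * (T₁ x t - 1 / ρ₁ x t))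
            * pdx α₁ x t
        = -(1 / ε) * (α₁ x t * ρ₁ x t)
            * (a₁ ^ 2 + deriv (fun τ' => P₁ τ' (s₁ x t)) (T₁ x t))
            * (1 / ρ₁ x t - T₁ x t) ^ 2)
      -- phase 2 energy balance
      ∧ (pdt (fun y r => (1 - α₁ y r) * ρ₂ y r
            * ((u₂ y r) ^ 2 / 2 + e₂ (T₂ y r) (s₂ y r)
              + ((P₂ (T₂ y r) (s₂ y r) + a₂ ^ 2 * (T₂ y r - 1 / ρ₂ y r)) ^ 2
                  - (P₂ (T₂ y r) (s₂ y r)) ^ 2) / (2 * a₂ ^ 2))) x t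
        + pdx (fun y r => (1 - α₁ y r) * ρ₂ y r
              * ((u₂ y r) ^ 2 / 2 + e₂ (T₂ y r) (s₂ y r)
                + ((P₂ (T₂ y r) (s₂ y r) + a₂ ^ 2 * (T₂ y r - 1 / ρ₂ y r)) ^ 2
                    - (P₂ (T₂ y r) (s₂ y r)) ^ 2) / (2 * a₂ ^ 2)) * u₂ y r
            + (1 - α₁ y r) * (P₂ (T₂ y r) (s₂ y r)
                + a₂ ^ 2 * (T₂ y r - 1 / ρ₂ y r)) * u₂ y r) x t
        - u₂ x t * (P₁ (T₁ x t) (s₁ x t) + a₁ ^ 2 * (T₁ x t - 1 / ρ₁ x t))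
            * pdx (fun y r => 1 - α₁ y r) x t
        = -(1 / ε) * ((1 - α₁ x t) * ρ₂ x t)
            * (a₂ ^ 2 + deriv (fun τ' => P₂ τ' (s₂ x t)) (T₂ x t))
            * (1 / ρ₂ x t - T₂ x t) ^ 2)
      -- in particular, the right-hand sides are nonpositive under Whitham's condition
      ∧ (a₁ ^ 2 > -deriv (fun τ' => P₁ τ' (s₁ x t)) (T₁ x t) →
          -(1 / ε) * (α₁ x t * ρ₁ x t)
              * (a₁ ^ 2 + deriv (fun τ' => P₁ τ' (s₁ x t)) (T₁ x t))
              * (1 / ρ₁ x t - T₁ x t) ^ 2 ≤ 0)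
      ∧ (a₂ ^ 2 > -deriv (fun τ' => P₂ τ' (s₂ x t)) (T₂ x t) →
          -(1 / ε) * ((1 - α₁ x t) * ρ₂ x t)
              * (a₂ ^ 2 + deriv (fun τ' => P₂ τ' (s₂ x t)) (T₂ x t))
              * (1 / ρ₂ x t - T₂ x t) ^ 2 ≤ 0) := by
  intro x t ht
  obtain ⟨hα₁pos, hα₁lt, hρ₁pos, hρ₂pos, hT₁pos, hT₂pos⟩ := hadm x t ht
  have hd : ∀ {f : ℝ → ℝ → ℝ}, ContDiffOn ℝ 1 (fun q : ℝ × ℝ => f q.1 q.2) upperHalf →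
      DifferentiableAt ℝ (fun q : ℝ × ℝ => f q.1 q.2) (x, t) := fun hf =>
    (hf.differentiableOn one_ne_zero).differentiableAt (isOpen_upperHalf.mem_nhds ⟨trivial, ht⟩)
  have halpha₂ :
      pdt (fun y r => 1 - α₁ y r) x t + u₂ x t * pdx (fun y r => 1 - α₁ y r) x t = 0 := by
    rw [pdt_const_sub, pdx_const_sub]
    linarith [halpha x t ht]
  refine ⟨?_, ?_, relaxation_source_nonpos hε (mul_pos hα₁pos hρ₁pos).le,
    relaxation_source_nonpos hε (mul_nonneg (by linarith) hρ₂pos.le)⟩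
  · exact phasic_energy_balance ha₁.ne' (hd hα₁) (hd hρ₁) (hd hu₁) (hd hs₁) (hd hT₁) hρ₁pos.ne'
      (hP₁ _ _ hT₁pos) (he₁ _ _ hT₁pos).1 (he₁ _ _ hT₁pos).2 (mul_eq_zero_of_right _ (sub_self _))
      (halpha x t ht) (hmass₁ x t ht) (hmom₁ x t ht) (hent₁ x t ht) (hTeq₁ x t ht)
  · exact phasic_energy_balance ha₂.ne' (hd (f := fun y r => 1 - α₁ y r) (contDiffOn_const.sub hα₁))
      (hd hρ₂) (hd hu₂) (hd hs₂) (hd hT₂) hρ₂pos.ne'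
      (hP₂ _ _ hT₂pos) (he₂ _ _ hT₂pos).1 (he₂ _ _ hT₂pos).2 (mul_eq_zero_of_left (sub_self _) _)
      halpha₂ (hmass₂ x t ht) (hmom₂ x t ht) (hent₂ x t ht) (hTeq₂ x t ht)
end
end

section
/- Let a > 0, s ∈ ℝ fixed, 𝒫(·,s) : (0,∞) → ℝ differentiable, and e(·,s) differentiable with ∂_τ e(T,s) = −𝒫(T,s) for all T > 0. Assume Whitham's condition a² > −∂_τ𝒫(T,s) for all T > 0. Fix u ∈ ℝ and τ > 0 and define ℰ(u,τ,T,s) = u²/2 + e(T,s) + ((𝒫(T,s) + a²(T−τ))² − 𝒫(T,s)²)/(2a²). Then T = τ is the unique global minimizer of T ↦ ℰ(u,τ,T,s) on (0,∞), i.e. ℰ(u,τ,T,s) > ℰ(u,τ,τ,s) for every T > 0 with T ≠ τ, and moreover ℰ(u,τ,τ,s) = u²/2 + e(τ,s) (the equilibrium relaxation energy equals the phasic total energy E(u,τ,s)). -/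
/-!
The derivative of `T ↦ ℰ(u,τ,T,s)` factors as `(T - τ) (∂_τ𝒫(T,s) + a²)`: the `-𝒫` coming from
`∂_τ e` cancels the `𝒫` produced by the quadratic correction term. Whitham's condition makes the
second factor positive, so `ℰ` strictly decreases to the left of `τ` and strictly increases to its
right.
-/

open Set

theorem lt_of_hasDerivAt_sub_mul_pos {S : Set ℝ} [hS : S.OrdConnected] {g k : ℝ → ℝ} {c T : ℝ}
    (hg : ∀ x ∈ S, HasDerivAt g ((x - c) * k x) x) (hk : ∀ x ∈ S, 0 < k x)
    (hc : c ∈ S) (hT : T ∈ S) (hne : T ≠ c) : g c < g T := by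
  have hcont : ∀ {y z}, y ∈ S → z ∈ S → ContinuousOn g (Icc y z) := fun hy hz x hx =>
    (hg x (hS.out hy hz hx)).continuousAt.continuousWithinAt
  rcases hne.lt_or_gt with hlt | hgt
  · have hanti : StrictAntiOn g (Icc T c) := by
      refine strictAntiOn_of_deriv_neg (convex_Icc T c) (hcont hT hc) fun x hx => ?_
      rw [interior_Icc] at hx
      have hxS : x ∈ S := hS.out hT hc (Ioo_subset_Icc_self hx)
      rw [(hg x hxS).deriv]
      exact mul_neg_of_neg_of_pos (sub_neg.2 hx.2) (hk x hxS)
    exact hanti (left_mem_Icc.2 hlt.le) (right_mem_Icc.2 hlt.le) hlt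
  · have hmono : StrictMonoOn g (Icc c T) := by
      refine strictMonoOn_of_deriv_pos (convex_Icc c T) (hcont hc hT) fun x hx => ?_
      rw [interior_Icc] at hx
      have hxS : x ∈ S := hS.out hc hT (Ioo_subset_Icc_self hx)
      rw [(hg x hxS).deriv]
      exact mul_pos (sub_pos.2 hx.1) (hk x hxS)
    exact hmono (left_mem_Icc.2 hgt.le) (right_mem_Icc.2 hgt.le) hgt

theorem HasDerivAt.suliciu_correction {f : ℝ → ℝ} {f' a τ T : ℝ} (ha : a ≠ 0)
    (hf : HasDerivAt f f' T) :
    HasDerivAt (fun x => ((f x + a ^ 2 * (x - τ)) ^ 2 - f x ^ 2) / (2 * a ^ 2))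
      (f T + (T - τ) * (f' + a ^ 2)) T := by
  have hπ : HasDerivAt (fun x => f x + a ^ 2 * (x - τ)) (f' + a ^ 2 * 1) T :=
    hf.add (((hasDerivAt_id T).sub_const τ).const_mul (a ^ 2))
  refine (((hπ.pow 2).sub (hf.pow 2)).div_const (2 * a ^ 2)).congr_deriv ?_
  field_simp
  ring

/-- Gibbs principle: under Whitham's condition
`a² > −∂_τ𝒫(T,s)`, the relaxed specific volume `T = τ` is the unique global
minimizer on `(0,∞)` of the relaxation energy
`T ↦ ℰ(u,τ,T,s) = u²/2 + e(T,s) + ((𝒫(T,s) + a²(T−τ))² − 𝒫(T,s)²)/(2a²)`,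
and at equilibrium the relaxation energy equals the phasic total energy
`E(u,τ,s) = u²/2 + e(τ,s)`. -/
theorem gibbs_principle
    (a : ℝ) (ha : 0 < a) (s : ℝ) (P e : ℝ → ℝ → ℝ) (dP : ℝ → ℝ)
    (hde : ∀ T : ℝ, 0 < T → HasDerivAt (fun τ' => e τ' s) (-(P T s)) T)
    (hdP : ∀ T : ℝ, 0 < T → HasDerivAt (fun τ' => P τ' s) (dP T) T)
    (whitham : ∀ T : ℝ, 0 < T → a ^ 2 > -(dP T))
    (u τ : ℝ) (hτ : 0 < τ) :
    (∀ T : ℝ, 0 < T → T ≠ τ →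
      u ^ 2 / 2 + e T s + ((P T s + a ^ 2 * (T - τ)) ^ 2 - (P T s) ^ 2) / (2 * a ^ 2)
        > u ^ 2 / 2 + e τ s
          + ((P τ s + a ^ 2 * (τ - τ)) ^ 2 - (P τ s) ^ 2) / (2 * a ^ 2))
    ∧ u ^ 2 / 2 + e τ s + ((P τ s + a ^ 2 * (τ - τ)) ^ 2 - (P τ s) ^ 2) / (2 * a ^ 2)
        = u ^ 2 / 2 + e τ s := by
  refine ⟨fun T hT hne => ?_, by simp⟩
  have hderiv : ∀ x ∈ Ioi (0 : ℝ), HasDerivAt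
      (fun x => u ^ 2 / 2 + e x s + ((P x s + a ^ 2 * (x - τ)) ^ 2 - P x s ^ 2) / (2 * a ^ 2))
      ((x - τ) * (dP x + a ^ 2)) x := fun x hx =>
    (((hde x hx).const_add (u ^ 2 / 2)).add
      ((hdP x hx).suliciu_correction (τ := τ) ha.ne')).congr_deriv (by ring)
  exact lt_of_hasDerivAt_sub_mul_pos hderiv
    (fun x hx => by linarith [whitham x hx]) (mem_Ioi.2 hτ) (mem_Ioi.2 hT) hne
end

section
/- Let α_{1,L}, α_{1,R} ∈ (0,1), τ_{k,L}, τ_{k,R} > 0 and u_{k,L}, u_{k,R}, p_{k,L}, p_{k,R} ∈ ℝ for k = 1,2, and fix a₂ > 0. For a₁ > 0 define u₁^♯(a₁) = (u_{1,L}+u_{1,R})/2 − (p_{1,R}−p_{1,L})/(2a₁), π₁^♯(a₁) = (p_{1,L}+p_{1,R})/2 − a₁(u_{1,R}−u_{1,L})/2, τ^♯_{1,L}(a₁) = τ_{1,L} + (u₁^♯(a₁) − u_{1,L})/a₁, τ^♯_{1,R}(a₁) = τ_{1,R} − (u₁^♯(a₁) − u_{1,R})/a₁; also u₂^♯ = (u_{2,L}+u_{2,R})/2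 − (p_{2,R}−p_{2,L})/(2a₂), π₂^♯ = (p_{2,L}+p_{2,R})/2 − a₂(u_{2,R}−u_{2,L})/2, Λ = (α_{2,R}−α_{2,L})/(α_{2,R}+α_{2,L}) with α_{2,·} = 1−α_{1,·}, and U^♯(a₁) = (u₁^♯(a₁) − u₂^♯ − (Λ/a₂)(π₁^♯(a₁) − π₂^♯)) / (1 + (a₁/a₂)|Λ|). Then there exists A > 0 such that for all a₁ ≥ A: τ^♯_{1,L}(a₁) > 0, τ^♯_{1,R}(a₁) > 0, and −a₁τ^♯_{1,R}(a₁) < U^♯(a₁) < a₁τ^♯_{1,L}(a₁) (condition (A) of the existence theorem for the relaxation Riemann solution holds). -/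
/-- condition (A) of the existence theorem for the relaxation
Riemann solution, namely
`−a₁τ^♯_{1,R} < U^♯ < a₁τ^♯_{1,L}` together with `τ^♯_{1,L} > 0` and
`τ^♯_{1,R} > 0`, holds whenever the relaxation parameter `a₁` is taken large
enough (`a₂` being fixed). -/
theorem conditionA_for_large_a1
    (α1L α1R : ℝ) (hα1L : α1L ∈ Set.Ioo (0 : ℝ) 1) (hα1R : α1R ∈ Set.Ioo (0 : ℝ) 1)
    (τ1L τ1R τ2L τ2R : ℝ)
    (hτ1L : 0 < τ1L) (hτ1R : 0 < τ1R) (hτ2L : 0 < τ2L) (hτ2R : 0 < τ2R)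
    (u1L u1R u2L u2R p1L p1R p2L p2R : ℝ)
    (a₂ : ℝ) (ha₂ : 0 < a₂)
    (u2sharp π2sharp Λ : ℝ)
    (hu2sharp : u2sharp = (u2L + u2R) / 2 - (p2R - p2L) / (2 * a₂))
    (hπ2sharp : π2sharp = (p2L + p2R) / 2 - a₂ * (u2R - u2L) / 2)
    (hΛ : Λ = ((1 - α1R) - (1 - α1L)) / ((1 - α1R) + (1 - α1L)))
    (u1sharp π1sharp τsharp1L τsharp1R Usharp : ℝ → ℝ)
    (hu1sharp : ∀ a₁ : ℝ, u1sharp a₁ = (u1L + u1R) / 2 - (p1R - p1L) / (2 * a₁))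
    (hπ1sharp : ∀ a₁ : ℝ, π1sharp a₁ = (p1L + p1R) / 2 - a₁ * (u1R - u1L) / 2)
    (hτsharp1L : ∀ a₁ : ℝ, τsharp1L a₁ = τ1L + (u1sharp a₁ - u1L) / a₁)
    (hτsharp1R : ∀ a₁ : ℝ, τsharp1R a₁ = τ1R - (u1sharp a₁ - u1R) / a₁)
    (hUsharp : ∀ a₁ : ℝ, Usharp a₁
        = (u1sharp a₁ - u2sharp - (Λ / a₂) * (π1sharp a₁ - π2sharp))
            / (1 + (a₁ / a₂) * |Λ|)) :
    ∃ A : ℝ, 0 < A ∧ ∀ a₁ : ℝ, A ≤ a₁ →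
      0 < τsharp1L a₁ ∧ 0 < τsharp1R a₁
      ∧ -(a₁ * τsharp1R a₁) < Usharp a₁ ∧ Usharp a₁ < a₁ * τsharp1L a₁ := by
  classical
  set S := (u1L + u1R) / 2 with hS
  set P := (p1R - p1L) / 2 with hP
  set Q := (p1L + p1R) / 2 with hQ
  set M := (u1R - u1L) / 2 with hM
  set T := S - u2sharp - (Λ / a₂) * (Q - π2sharp) with hT
  set K := |M| + |P| with hK
  set C := |T| + |P| + |M| with hC
  set τm := min τ1L τ1R with hτm
  clear_value S P Q M T K C τm
  have hτm0 : 0 < τm := by rw [hτm]; exact lt_min hτ1L hτ1R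
  have hK0 : 0 ≤ K := by rw [hK]; positivity
  have hC0 : 0 ≤ C := by rw [hC]; positivity
  refine ⟨max 1 (2 * (K + C + 1) / τm), lt_of_lt_of_le one_pos (le_max_left _ _), ?_⟩
  intro a ha
  have ha1 : (1 : ℝ) ≤ a := le_trans (le_max_left _ _) ha
  have ha0 : (0 : ℝ) < a := lt_of_lt_of_le one_pos ha1
  have hane : a ≠ 0 := ne_of_gt ha0
  have haτ : 2 * (K + C + 1) ≤ a * τm := by
    have h := le_trans (le_max_right (1 : ℝ) _) ha
    exact (div_le_iff₀ hτm0).mp h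
  have hu : u1sharp a = S - P / a := by
    rw [hu1sharp, hS, hP]; field_simp
  have hπ : π1sharp a = Q - a * M := by
    rw [hπ1sharp, hQ, hM]; ring
  have hPa : |P / a| ≤ |P| := by
    rw [abs_div, abs_of_pos ha0]
    exact div_le_self (abs_nonneg P) ha1
  have hδL : |u1sharp a - u1L| ≤ K := by
    have heq : u1sharp a - u1L = M - P / a := by rw [hu, hS, hM, hP]; ring
    rw [heq]
    calc |M - P / a| ≤ |M| + |P / a| := abs_sub _ _
      _ ≤ |M| + |P| := by linarith
      _ = K := hK.symm
  have hδR : |u1sharp a - u1R| ≤ K := by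
    have heq : u1sharp a - u1R = -M - P / a := by rw [hu, hS, hM, hP]; ring
    rw [heq]
    calc |-M - P / a| ≤ |-M| + |P / a| := abs_sub _ _
      _ ≤ |M| + |P| := by rw [abs_neg]; linarith
      _ = K := hK.symm
  -- bound on Usharp
  have hDpos : (0 : ℝ) < 1 + (a / a₂) * |Λ| := by positivity
  have hUb : |Usharp a| ≤ C := by
    have hNeq : u1sharp a - u2sharp - (Λ / a₂) * (π1sharp a - π2sharp)
        = (T - P / a) + (Λ / a₂) * (a * M) := by
      rw [hu, hπ, hT]; ring
    have hN : |u1sharp a - u2sharp - (Λ / a₂) * (π1sharp a - π2sharp)|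
        ≤ |T| + |P| + (a / a₂) * |Λ| * |M| := by
      rw [hNeq]
      calc |(T - P / a) + (Λ / a₂) * (a * M)|
          ≤ |T - P / a| + |(Λ / a₂) * (a * M)| := abs_add_le _ _
        _ ≤ (|T| + |P / a|) + |(Λ / a₂) * (a * M)| := by
            have := abs_sub T (P / a); linarith
        _ = (|T| + |P / a|) + (a / a₂) * |Λ| * |M| := by
            have : |(Λ / a₂) * (a * M)| = (a / a₂) * |Λ| * |M| := by
              rw [abs_mul, abs_mul, abs_div, abs_of_pos ha₂, abs_of_pos ha0]; ring
            rw [this]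
        _ ≤ |T| + |P| + (a / a₂) * |Λ| * |M| := by linarith
    rw [hUsharp, abs_div, abs_of_pos hDpos, div_le_iff₀ hDpos]
    have hnn : 0 ≤ (a / a₂) * |Λ| := by positivity
    nlinarith [abs_nonneg T, abs_nonneg P, abs_nonneg M, hN]
  have hLeq : a * τsharp1L a = a * τ1L + (u1sharp a - u1L) := by
    rw [hτsharp1L, mul_add, ← mul_div_assoc, mul_div_cancel_left₀ _ hane]
  have hReq : a * τsharp1R a = a * τ1R - (u1sharp a - u1R) := by
    rw [hτsharp1R, mul_sub, ← mul_div_assoc, mul_div_cancel_left₀ _ hane]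
  have hτ1Lm : a * τm ≤ a * τ1L := by
    have h : τm ≤ τ1L := by rw [hτm]; exact min_le_left _ _
    exact mul_le_mul_of_nonneg_left h ha0.le
  have hτ1Rm : a * τm ≤ a * τ1R := by
    have h : τm ≤ τ1R := by rw [hτm]; exact min_le_right _ _
    exact mul_le_mul_of_nonneg_left h ha0.le
  have hLbig : K + 2 * C + 2 ≤ a * τsharp1L a := by
    rw [hLeq]
    linarith [neg_abs_le (u1sharp a - u1L), hδL, haτ, hτ1Lm]
  have hRbig : K + 2 * C + 2 ≤ a * τsharp1R a := by
    rw [hReq]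
    linarith [le_abs_self (u1sharp a - u1R), hδR, haτ, hτ1Rm]
  have hLpos : 0 < a * τsharp1L a := by linarith
  have hRpos : 0 < a * τsharp1R a := by linarith
  refine ⟨?_, ?_, ?_, ?_⟩
  · have := div_pos hLpos ha0
    rwa [mul_div_cancel_left₀ _ hane] at this
  · have := div_pos hRpos ha0
    rwa [mul_div_cancel_left₀ _ hane] at this
  · linarith [neg_abs_le (Usharp a), hUb, hRbig]
  · linarith [le_abs_self (Usharp a), hUb, hLbig]
end

section
/- Let ν > 0 and ω ∈ (−1,1), and set b = ((1+ω²)/(1−ω²))(1 + 1/ν). Then b² − 4/ν ≥ 0, so that M₀(ω) := (1/2)(b − √(b² − 4/ν)) is well defined, and M₀(ω) satisfies 0 < M₀(ω) ≤ min(1, 1/ν), with M₀(ω) a root of the quadratic X² − bX + 1/ν = 0. -/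
/-- for `ν > 0` and `ω ∈ (−1,1)`, setting
`b = ((1+ω²)/(1−ω²))(1 + 1/ν)`, the discriminant `b² − 4/ν` is nonnegative, so
that `M₀(ω) = (1/2)(b − √(b² − 4/ν))` is well defined; moreover
`0 < M₀(ω) ≤ min(1, 1/ν)` and `M₀(ω)` is a root of `X² − bX + 1/ν`. -/
theorem M0_well_defined_and_bounds
    (ν ω : ℝ) (hν : 0 < ν) (hω : ω ∈ Set.Ioo (-1 : ℝ) 1)
    (b : ℝ) (hb : b = ((1 + ω ^ 2) / (1 - ω ^ 2)) * (1 + 1 / ν))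
    (M₀ : ℝ) (hM₀ : M₀ = (1 / 2) * (b - Real.sqrt (b ^ 2 - 4 / ν))) :
    0 ≤ b ^ 2 - 4 / ν
    ∧ 0 < M₀ ∧ M₀ ≤ min 1 (1 / ν)
    ∧ M₀ ^ 2 - b * M₀ + 1 / ν = 0 := by
  obtain ⟨hω1, hω2⟩ := hω
  have hu : (0:ℝ) < 1 / ν := by positivity
  rw [show (4:ℝ)/ν = 4*(1/ν) by ring] at hM₀ ⊢
  have hden : (0:ℝ) < 1 - ω ^ 2 := by nlinarith
  have hc : (1:ℝ) ≤ (1 + ω ^ 2) / (1 - ω ^ 2) := by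
    rw [le_div_iff₀ hden]; nlinarith
  have hb1 : 1 + 1 / ν ≤ b := by
    rw [hb]; nlinarith
  have hbpos : 0 < b := by linarith
  have hD : 0 ≤ b ^ 2 - 4 * (1 / ν) := by
    nlinarith [sq_nonneg (1 - 1/ν), sq_nonneg (b - (1 + 1/ν))]
  have hsq : Real.sqrt (b ^ 2 - 4 * (1 / ν)) ^ 2 = b ^ 2 - 4 * (1 / ν) :=
    Real.sq_sqrt hD
  have hsnn : 0 ≤ Real.sqrt (b ^ 2 - 4 * (1 / ν)) := Real.sqrt_nonneg _
  have hslt : Real.sqrt (b ^ 2 - 4 * (1 / ν)) < b :=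
    (Real.sqrt_lt' hbpos).mpr (by nlinarith)
  have key : ∀ t : ℝ, (b - t) ^ 2 ≤ b ^ 2 - 4 * (1 / ν) →
      b - t ≤ Real.sqrt (b ^ 2 - 4 * (1 / ν)) := by
    intro t ht
    calc b - t ≤ |b - t| := le_abs_self _
      _ = Real.sqrt ((b - t) ^ 2) := (Real.sqrt_sq_eq_abs _).symm
      _ ≤ Real.sqrt (b ^ 2 - 4 * (1 / ν)) := Real.sqrt_le_sqrt ht
  have h1 : M₀ ≤ 1 := by
    have := key 2 (by nlinarith)
    rw [hM₀]; linarith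
  have h2 : M₀ ≤ 1 / ν := by
    have := key (2 * (1 / ν)) (by
      nlinarith [mul_pos hu hu, mul_le_mul_of_nonneg_left hb1 hu.le])
    rw [hM₀]; linarith
  refine ⟨hD, by rw [hM₀]; linarith, le_min h1 h2, ?_⟩
  rw [hM₀]; nlinarith [hsq]
end
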